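/- Let (g, [·,·]_g) be a Lie algebra over a field K, ρ : g → End(V) a representation of g on a vector space V, ω : g × g → V an alternating bilinear 2-cocycle (i.e., ρ(x)ω(y,z) − ρ(y)ω(x,z) + ρ(z)ω(x,y) − ω([x,y]_g, z) + ω([x,z]_g, y) − ω([y,z]_g, x) = 0 for all x,y,z ∈ g), and let B : V → g be an ω-twisted Rota-Baxter operator, i.e., [B(u), B(v)]_g = B(ρ(B(u))v − ρ(B(v))u + ω(B(u), B(v))) for all u, v ∈ V. Then the bracket [u, v]_B := ρ(B(u))v − ρ(B(v))u + ω(B(u), B(v)) is a Lie algebra structure on V, and the map σ : V → End(g) defined by σ(v)(x) = [B(v), x]_g + B(ρ(x)v) − B(ω(B(v), x)) is a representation of the Lie algebra (V, [·,·]_B) on the vector space g, i.e., σ([u,v]_B) = σ(u) ∘ σ(v) − σ(v) ∘ σ(u) for all u, v ∈ V. -/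

import Mathlib

/-!
`B` intertwines `[·,·]_B` with the bracket of `L`, i.e. `B [u, v]_B = [Bu, Bv]`. Expanding
`[u, [v, w]_B]_B` with this, the Jacobi identity for `[·,·]_B` splits into the representation
property of `ρ` (the `ρρ`-terms) and the cyclic form of the cocycle identity at `(Bu, Bv, Bw)`
(the `ω`-terms). In the same way `σ(u)(σ(v)x) = [Bu, [Bv, x]] + B(Φ(u, v, x))` for an explicit
`Φ` in which all terms `ρ(B ·)` and `ω(·, B ·)` cancel, and the commutator of the `σ`'s reduces,
via the Jacobi identity of `L`, to an identity in `V` between `Φ(u, v, x) - Φ(v, u, x)` and the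
`V`-part of `σ([u, v]_B)x`, which is again the representation property plus the cocycle identity.
-/

/-- A bracket `b` on a `K`-vector space `V` is a Lie algebra structure if it is
bilinear, alternating, and satisfies the Jacobi identity. -/
def IsLieBracketOn (K V : Type*) [Field K] [AddCommGroup V] [Module K V]
    (b : V → V → V) : Prop :=
  (∀ x y z : V, b (x + y) z = b x z + b y z) ∧
  (∀ (c : K) (x y : V), b (c • x) y = c • b x y) ∧
  (∀ x y z : V, b x (y + z) = b x y + b x z) ∧
  (∀ (c : K) (x y : V), b x (c • y) = c • b x y) ∧
  (∀ x : V, b x x = 0) ∧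
  (∀ x y z : V, b x (b y z) + b y (b z x) + b z (b x y) = 0)

variable {K L V : Type*} [Field K] [LieRing L] [LieAlgebra K L]
  [AddCommGroup V] [Module K V]

/-- The bracket `[u, v]_B = ρ(Bu)v − ρ(Bv)u + ω(Bu, Bv)` on `V`. -/
def brTw (ρ : L →ₗ[K] Module.End K V) (ω : L →ₗ[K] L →ₗ[K] V) (B : V →ₗ[K] L)
    (u v : V) : V :=
  ρ (B u) v - ρ (B v) u + ω (B u) (B v)

/-- The map `σ(v)(x) = [Bv, x] + B(ρ(x)v) − B(ω(Bv, x))`. -/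
def sigmaTw (ρ : L →ₗ[K] Module.End K V) (ω : L →ₗ[K] L →ₗ[K] V) (B : V →ₗ[K] L)
    (v : V) (x : L) : L :=
  ⁅B v, x⁆ + B (ρ x v) - B (ω (B v) x)

section TwistedRotaBaxter

variable (ρ : L →ₗ[K] Module.End K V) (ω : L →ₗ[K] L →ₗ[K] V) (B : V →ₗ[K] L)

def IsRepresentation : Prop :=
  ∀ x y : L, ρ ⁅x, y⁆ = ρ x * ρ y - ρ y * ρ x

def IsTwoCocycle : Prop :=
  ∀ x y z : L,
    ρ x (ω y z) - ρ y (ω x z) + ρ z (ω x y) - ω ⁅x, y⁆ z + ω ⁅x, z⁆ y - ω ⁅y, z⁆ x = 0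

def IsTwistedRotaBaxter : Prop :=
  ∀ u v : V, ⁅B u, B v⁆ = B (brTw ρ ω B u v)

theorem brTw_add_left (u v w : V) : brTw ρ ω B (u + v) w = brTw ρ ω B u w + brTw ρ ω B v w := by
  simp only [brTw, map_add, LinearMap.add_apply]
  abel

theorem brTw_add_right (u v w : V) : brTw ρ ω B u (v + w) = brTw ρ ω B u v + brTw ρ ω B u w := by
  simp only [brTw, map_add, LinearMap.add_apply]
  abel

theorem brTw_smul_left (c : K) (u v : V) : brTw ρ ω B (c • u) v = c • brTw ρ ω B u v := by
  simp only [brTw, map_smul, LinearMap.smul_apply, smul_sub, smul_add]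

theorem brTw_smul_right (c : K) (u v : V) : brTw ρ ω B u (c • v) = c • brTw ρ ω B u v := by
  simp only [brTw, map_smul, LinearMap.smul_apply, smul_sub, smul_add]

variable {ρ ω B}

theorem brTw_self (hω : ω.IsAlt) (u : V) : brTw ρ ω B u u = 0 := by
  rw [brTw, sub_self, zero_add, hω]

theorem IsRepresentation.apply_lie (hρ : IsRepresentation ρ) (x y : L) (w : V) :
    ρ ⁅x, y⁆ w = ρ x (ρ y w) - ρ y (ρ x w) := by
  rw [hρ, LinearMap.sub_apply, Module.End.mul_apply, Module.End.mul_apply]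

theorem IsTwoCocycle.cyclic (hcocycle : IsTwoCocycle ρ ω) (hω : ω.IsAlt) (a b c : L) :
    ρ a (ω b c) + ρ b (ω c a) + ρ c (ω a b) + ω a ⁅b, c⁆ + ω b ⁅c, a⁆ + ω c ⁅a, b⁆ = 0 := by
  have hρω : ρ b (ω c a) = -ρ b (ω a c) := by rw [← hω.neg, map_neg]
  have hωlie : ω ⁅c, a⁆ b = -ω ⁅a, c⁆ b := by rw [← lie_skew, map_neg, LinearMap.neg_apply]
  linear_combination (norm := abel) hcocycle a b c + hρω - hω.neg ⁅b, c⁆ a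
    - hω.neg ⁅c, a⁆ b - hω.neg ⁅a, b⁆ c - hωlie

/-- The `V`-parts of `σ(u)(σ(v)x) - σ(v)(σ(u)x)` (see `sigmaTw_sigmaTw`) and of `σ([u, v]_B)x`
(see `sigmaTw_brTw`), for `a = Bu` and `b = Bv`. -/
theorem IsTwoCocycle.sigma_commutator_identity (hcocycle : IsTwoCocycle ρ ω)
    (hρ : IsRepresentation ρ) (hω : ω.IsAlt) (a b x : L) (u v : V) :
    (ρ a (ρ x v) + ρ ⁅b, x⁆ u - ρ a (ω b x) - ω a ⁅b, x⁆) -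
        (ρ b (ρ x u) + ρ ⁅a, x⁆ v - ρ b (ω a x) - ω b ⁅a, x⁆) =
      ρ x (ρ a v - ρ b u + ω a b) - ω ⁅a, b⁆ x := by
  simp only [hρ.apply_lie, map_add, map_sub]
  linear_combination (norm := abel) -hcocycle a b x + hω.neg a ⁅b, x⁆ - hω.neg b ⁅a, x⁆

theorem IsTwistedRotaBaxter.brTw_brTw (hB : IsTwistedRotaBaxter ρ ω B) (u v w : V) :
    brTw ρ ω B u (brTw ρ ω B v w) =
      ρ (B u) (brTw ρ ω B v w) - ρ ⁅B v, B w⁆ u + ω (B u) ⁅B v, B w⁆ := by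
  rw [brTw, ← hB]

theorem IsTwistedRotaBaxter.brTw_jacobi (hB : IsTwistedRotaBaxter ρ ω B)
    (hρ : IsRepresentation ρ) (hω : ω.IsAlt) (hcocycle : IsTwoCocycle ρ ω) (u v w : V) :
    brTw ρ ω B u (brTw ρ ω B v w) + brTw ρ ω B v (brTw ρ ω B w u) +
      brTw ρ ω B w (brTw ρ ω B u v) = 0 := by
  simp only [hB.brTw_brTw]
  simp only [brTw, map_add, map_sub, hρ.apply_lie]
  linear_combination (norm := abel) hcocycle.cyclic hω (B u) (B v) (B w)

theorem IsTwistedRotaBaxter.sigmaTw_brTw (hB : IsTwistedRotaBaxter ρ ω B) (u v : V) (x : L) :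
    sigmaTw ρ ω B (brTw ρ ω B u v) x =
      ⁅⁅B u, B v⁆, x⁆ + B (ρ x (brTw ρ ω B u v) - ω ⁅B u, B v⁆ x) := by
  rw [sigmaTw, ← hB, map_sub, add_sub_assoc]

theorem IsTwistedRotaBaxter.sigmaTw_sigmaTw (hB : IsTwistedRotaBaxter ρ ω B) (u v : V) (x : L) :
    sigmaTw ρ ω B u (sigmaTw ρ ω B v x) =
      ⁅B u, ⁅B v, x⁆⁆ + B (ρ (B u) (ρ x v) + ρ ⁅B v, x⁆ u - ρ (B u) (ω (B v) x) -
        ω (B u) ⁅B v, x⁆) := by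
  simp only [sigmaTw, lie_add, lie_sub, hB _ _, brTw, map_add, map_sub, LinearMap.add_apply,
    LinearMap.sub_apply]
  abel

end TwistedRotaBaxter

/-- Let `ρ : L → End(V)` be a representation of a Lie algebra `L` on
a vector space `V`, `ω` an alternating bilinear 2-cocycle, and `B : V → L` an
`ω`-twisted Rota-Baxter operator, i.e.
`[Bu, Bv] = B(ρ(Bu)v − ρ(Bv)u + ω(Bu, Bv))`. Then
`[u, v]_B = ρ(Bu)v − ρ(Bv)u + ω(Bu, Bv)` is a Lie algebra structure on `V`, and
`σ(v)(x) = [Bv, x] + B(ρ(x)v) − B(ω(Bv, x))` is a representation of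
`(V, [·,·]_B)` on the vector space `L`. -/
theorem stmt18 (K L V : Type*) [Field K] [LieRing L] [LieAlgebra K L]
    [AddCommGroup V] [Module K V]
    (ρ : L →ₗ[K] Module.End K V)
    (hρ : ∀ x y : L, ρ ⁅x, y⁆ = ρ x * ρ y - ρ y * ρ x)
    (ω : L →ₗ[K] L →ₗ[K] V) (halt : ∀ x : L, ω x x = 0)
    (hcocycle : ∀ x y z : L,
      ρ x (ω y z) - ρ y (ω x z) + ρ z (ω x y)
        - ω ⁅x, y⁆ z + ω ⁅x, z⁆ y - ω ⁅y, z⁆ x = 0)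
    (B : V →ₗ[K] L)
    (hB : ∀ u v : V, ⁅B u, B v⁆ = B (ρ (B u) v - ρ (B v) u + ω (B u) (B v))) :
    IsLieBracketOn K V (brTw ρ ω B) ∧
    (∀ (u v : V) (x : L),
      sigmaTw ρ ω B (brTw ρ ω B u v) x =
        sigmaTw ρ ω B u (sigmaTw ρ ω B v x) - sigmaTw ρ ω B v (sigmaTw ρ ω B u x)) := by
  have hB : IsTwistedRotaBaxter ρ ω B := hB
  have hcocycle : IsTwoCocycle ρ ω := hcocycle
  refine ⟨⟨brTw_add_left ρ ω B, brTw_smul_left ρ ω B, brTw_add_right ρ ω B,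
    brTw_smul_right ρ ω B, brTw_self halt, hB.brTw_jacobi hρ halt hcocycle⟩,
    fun u v x => ?_⟩
  rw [hB.sigmaTw_brTw, hB.sigmaTw_sigmaTw, hB.sigmaTw_sigmaTw, lie_lie, brTw,
    ← hcocycle.sigma_commutator_identity hρ halt, map_sub]
  abel
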